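/- arXiv:2407.20998 — 4 statements merged into one kernel-verified Lean document; each statement's English description precedes it below -/
import Mathlib

section
/- The dual lattice of L_W = {[[a, −b/N],[c, −a]] : a,b,c ∈ ℤ} with respect to the bilinear form (x,y) = N·tr(x·adj(y)) on the space of trace-zero 2×2 rational matrices equals L_W' = {[[a/(2N), −b/N],[c, −a/(2N)]] : a,b,c ∈ ℤ}. -/
open Matrix

/-- The lattice `L_W = {[[a, −b/N],[c, −a]] : a,b,c ∈ ℤ}`. -/
def latLW (N : ℕ) : Set (Matrix (Fin 2) (Fin 2) ℚ) :=
  {x | ∃ a b c : ℤ, x = !![(a : ℚ), -(b : ℚ)/(N : ℚ); (c : ℚ), -(a : ℚ)]}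

/-- The lattice `L_W' = {[[a/2N, −b/N],[c, −a/2N]] : a,b,c ∈ ℤ}`. -/
def latLW' (N : ℕ) : Set (Matrix (Fin 2) (Fin 2) ℚ) :=
  {x | ∃ a b c : ℤ,
    x = !![(a : ℚ)/(2*N : ℚ), -(b : ℚ)/(N : ℚ); (c : ℚ), -(a : ℚ)/(2*N : ℚ)]}

/-! The pairing of `x` with the element `(a, b, c)` of `L_W` is
`a · N(x₁₁ − x₀₀) − c · N x₀₁ + b · x₁₀`, so `x` lies in the dual lattice iff these three
coordinates are integers. Together with `x₀₀ + x₁₁ = 0` this is exactly membership in `L_W'`,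
whose integer `a` is `−N(x₁₁ − x₀₀) = 2N x₀₀`. -/

theorem Matrix.trace_mul_adjugate_fin_two {R : Type*} [CommRing R]
    (x y : Matrix (Fin 2) (Fin 2) R) :
    (x * y.adjugate).trace = x 0 0 * y 1 1 - x 0 1 * y 1 0 - x 1 0 * y 0 1 + x 1 1 * y 0 0 := by
  rw [adjugate_fin_two, trace_fin_two]
  simp only [mul_apply, Fin.sum_univ_two, of_apply, cons_val', cons_val_zero, cons_val_one,
    cons_val_fin_one]
  ring

lemma pairing_latLW {N : ℕ} (hN : N ≠ 0) (x : Matrix (Fin 2) (Fin 2) ℚ) (a b c : ℤ) :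
    (N : ℚ) * (x * (!![(a : ℚ), -(b : ℚ)/(N : ℚ); (c : ℚ), -(a : ℚ)]).adjugate).trace
      = a * (N * (x 1 1 - x 0 0)) - c * (N * x 0 1) + b * x 1 0 := by
  rw [trace_mul_adjugate_fin_two]
  simp only [of_apply, cons_val', cons_val_zero, cons_val_one, cons_val_fin_one, empty_val']
  field_simp
  ring

lemma forall_mem_latLW_int_iff {N : ℕ} (hN : N ≠ 0) (x : Matrix (Fin 2) (Fin 2) ℚ) :
    (∀ y ∈ latLW N, ∃ m : ℤ, (N : ℚ) * (x * y.adjugate).trace = m) ↔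
      (∃ a : ℤ, N * (x 1 1 - x 0 0) = a) ∧ (∃ b : ℤ, N * x 0 1 = b) ∧ (∃ c : ℤ, x 1 0 = c) := by
  constructor
  · intro h
    have h' (a b c : ℤ) : ∃ m : ℤ, a * (N * (x 1 1 - x 0 0)) - c * (N * x 0 1) + b * x 1 0 = m := by
      simpa only [pairing_latLW hN] using h _ ⟨a, b, c, rfl⟩
    obtain ⟨a, ha⟩ := h' 1 0 0
    obtain ⟨c, hc⟩ := h' 0 1 0
    obtain ⟨b, hb⟩ := h' 0 0 1
    push_cast at ha hb hc
    exact ⟨⟨a, by linarith⟩, ⟨-b, by push_cast; linarith⟩, ⟨c, by linarith⟩⟩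
  · rintro ⟨⟨a, ha⟩, ⟨b, hb⟩, ⟨c, hc⟩⟩ _ ⟨a', b', c', rfl⟩
    refine ⟨a' * a - c' * b + b' * c, ?_⟩
    rw [pairing_latLW hN, ha, hb, hc]
    push_cast
    ring

lemma mem_latLW'_iff {N : ℕ} (hN : N ≠ 0) (x : Matrix (Fin 2) (Fin 2) ℚ) :
    x ∈ latLW' N ↔ x.trace = 0 ∧
      (∃ a : ℤ, N * (x 1 1 - x 0 0) = a) ∧ (∃ b : ℤ, N * x 0 1 = b) ∧ (∃ c : ℤ, x 1 0 = c) := by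
  have hN' : (N : ℚ) ≠ 0 := Nat.cast_ne_zero.mpr hN
  rw [trace_fin_two]
  constructor
  · rintro ⟨a, b, c, rfl⟩
    simp only [of_apply, cons_val', cons_val_zero, cons_val_one, cons_val_fin_one, empty_val']
    refine ⟨by ring, ⟨-a, by push_cast; field_simp; ring⟩, ⟨-b, by push_cast; field_simp⟩, ⟨c, rfl⟩⟩
  · rintro ⟨htr, ⟨a, ha⟩, ⟨b, hb⟩, ⟨c, hc⟩⟩
    have h00 : x 0 0 = (-a : ℤ) / (2 * N) := by
      rw [eq_div_iff (by positivity)]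
      push_cast
      linear_combination N * htr - ha
    have h01 : x 0 1 = -(-b : ℤ) / N := by
      rw [eq_div_iff hN']
      push_cast
      linear_combination hb
    refine ⟨-a, -b, c, ?_⟩
    rw [eta_fin_two x, h00, h01, hc, eq_neg_of_add_eq_zero_right htr, h00]
    simp only [neg_div]

/-- The dual lattice of `L_W` inside the trace-zero 2×2 rational matrices,
with respect to the bilinear form `(x,y) = N·tr(x·adj(y))`, equals `L_W'`. -/
theorem stmt4 (N : ℕ) (hN : 0 < N) :
    {x : Matrix (Fin 2) (Fin 2) ℚ | x.trace = 0 ∧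
      ∀ y ∈ latLW N, ∃ m : ℤ, (N : ℚ) * (x * y.adjugate).trace = m} = latLW' N := by
  ext x
  rw [Set.mem_ofPred_eq, forall_mem_latLW_int_iff hN.ne', mem_latLW'_iff hN.ne']
end

section
/- The quotient group L_W'/L_W is cyclic of order 2N, and the map r ↦ [[r/(2N), 0],[0, −r/(2N)]] mod L_W defines a group isomorphism ℤ/2Nℤ → L_W'/L_W. -/
open Matrix

/-- `μ_r = [[r/2N, 0],[0, −r/2N]]`. -/
def muR (N : ℕ) (r : ℤ) : Matrix (Fin 2) (Fin 2) ℚ :=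
  !![(r : ℚ)/(2*N : ℚ), 0; 0, -(r : ℚ)/(2*N : ℚ)]

/-- `L_W'/L_W` is cyclic of order `2N` and `r ↦ μ_r mod L_W` is an
isomorphism `ℤ/2Nℤ → L_W'/L_W`: (i) `L_W ⊆ L_W'`; (ii) each `μ_r` lies in `L_W'`;
(iii) `μ_r ≡ μ_s mod L_W` iff `r ≡ s mod 2N` (injectivity on `ℤ/2Nℤ`, additivity being
clear); (iv) every element of `L_W'` is congruent to some `μ_r` mod `L_W` (surjectivity). -/
theorem stmt5 (N : ℕ) (hN : 0 < N) :
    latLW N ⊆ latLW' N ∧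
    (∀ r : ℤ, muR N r ∈ latLW' N) ∧
    (∀ r s : ℤ, (muR N r - muR N s ∈ latLW N) ↔ ((r : ZMod (2*N)) = (s : ZMod (2*N)))) ∧
    (∀ x ∈ latLW' N, ∃ r : ℤ, x - muR N r ∈ latLW N) := by
  have hN0 : (N : ℚ) ≠ 0 := Nat.cast_ne_zero.mpr hN.ne'
  have h2N : (2 * N : ℚ) ≠ 0 := by positivity
  refine ⟨?_, ?_, ?_, ?_⟩
  · rintro x ⟨a, b, c, rfl⟩
    refine ⟨2 * N * a, b, c, ?_⟩
    ext i j
    fin_cases i <;> fin_cases j <;> simp <;> push_cast <;> field_simp <;> ring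
  · intro r
    exact ⟨r, 0, 0, by norm_num [muR]⟩
  · intro r s
    constructor
    · rintro ⟨a, b, c, h⟩
      have h00 := congrFun (congrFun h 0) 0
      simp [muR] at h00
      have : (r : ℚ) - s = a * (2 * N) := by
        field_simp at h00
        linarith
      have hz : (r : ℤ) - s = a * (2 * N) := by exact_mod_cast this
      have hdvd : ((2 * N : ℕ) : ℤ) ∣ r - s := ⟨a, by push_cast; linarith⟩
      exact (ZMod.intCast_eq_intCast_iff' r s (2 * N)).mpr
        (Int.ModEq.symm ((Int.modEq_iff_dvd).mpr (by simpa using hdvd)))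
    · intro h
      have hdvd : ((2 * N : ℕ) : ℤ) ∣ r - s :=
        (Int.modEq_iff_dvd).mp ((ZMod.intCast_eq_intCast_iff' r s (2 * N)).mp h).symm
      obtain ⟨k, hk⟩ := hdvd
      refine ⟨k, 0, 0, ?_⟩
      have hq : (r : ℚ) - s = 2 * N * k := by
        have : (r : ℤ) - s = 2 * N * k := by push_cast at hk ⊢; linarith
        exact_mod_cast this
      have h00 : (r : ℚ)/(2*N) - (s : ℚ)/(2*N) = k := by
        rw [div_sub_div_same, hq]; field_simp
      simp only [muR]
      ext i j
      fin_cases i <;> fin_cases j <;> simp [Matrix.sub_apply, neg_div] <;> linarith [h00]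
  · rintro x ⟨a, b, c, rfl⟩
    refine ⟨a, 0, b, c, ?_⟩
    ext i j
    fin_cases i <;> fin_cases j <;> simp [muR, Matrix.sub_apply]
end

section
/- The dual lattice of L = {[[a, −b/N],[c, d]] : a,b,c,d ∈ ℤ, a ≡ d mod 2} inside V = M₂(ℚ), with respect to the bilinear form (x,y) = N·tr(x·adj(y)), equals L' = {[[a/(2N), −b/N],[c, d/(2N)]] : a,b,c,d ∈ ℤ, a ≡ d mod 2}. -/
/-
Write `⟨x, y⟩ = N·tr(x·adj y)`. For `y = [[a, -b/N], [c, d]]` this is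
`N·(x₀₀ d - x₀₁ c + x₁₁ a) + x₁₀ b`. Testing `x` against the five elements of `L` with
`(a, b, c, d) = (0,1,0,0), (0,0,1,0), (2,0,0,0), (0,0,0,2), (1,0,0,1)` shows that `x₁₀`, `N x₀₁`,
`2N x₁₁`, `2N x₀₀` are integers and that `2N x₀₀ + 2N x₁₁` is even, i.e. `x ∈ L'`. Conversely, for
`x ∈ L'` the pairing is `(A d + D a)/2 + B c + C b`, and `A d + D a` is even because `A ≡ D` and
`a ≡ d` mod 2.
-/

open Matrix

/-- The lattice `L = {[[a, −b/N],[c, d]] : a,b,c,d ∈ ℤ, a ≡ d mod 2}` in `M₂(ℚ)`. -/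
def latL (N : ℕ) : Set (Matrix (Fin 2) (Fin 2) ℚ) :=
  {x | ∃ a b c d : ℤ, a % 2 = d % 2 ∧
    x = !![(a : ℚ), -(b : ℚ)/(N : ℚ); (c : ℚ), (d : ℚ)]}

/-- The lattice `L' = {[[a/2N, −b/N],[c, d/2N]] : a,b,c,d ∈ ℤ, a ≡ d mod 2}`. -/
def latL' (N : ℕ) : Set (Matrix (Fin 2) (Fin 2) ℚ) :=
  {x | ∃ a b c d : ℤ, a % 2 = d % 2 ∧
    x = !![(a : ℚ)/(2*N : ℚ), -(b : ℚ)/(N : ℚ); (c : ℚ), (d : ℚ)/(2*N : ℚ)]}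

theorem pairing_latL_elem {N : ℕ} (hN : N ≠ 0) (x : Matrix (Fin 2) (Fin 2) ℚ) (a b c d : ℤ) :
    (N : ℚ) * (x * (!![(a : ℚ), -(b : ℚ)/(N : ℚ); (c : ℚ), (d : ℚ)]).adjugate).trace =
      N * (x 0 0 * d - x 0 1 * c + x 1 1 * a) + x 1 0 * b := by
  rw [trace_mul_adjugate_fin_two]
  simp only [of_apply, cons_val', cons_val_zero, cons_val_one, empty_val', cons_val_fin_one]
  field_simp
  ring

theorem pairing_latL'_elem_latL_elem {N : ℕ} (hN : N ≠ 0) (A B C D a b c d : ℤ) :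
    (N : ℚ) * (!![(A : ℚ)/(2*N : ℚ), -(B : ℚ)/(N : ℚ); (C : ℚ), (D : ℚ)/(2*N : ℚ)] *
      (!![(a : ℚ), -(b : ℚ)/(N : ℚ); (c : ℚ), (d : ℚ)]).adjugate).trace =
      ((A * d + D * a : ℤ) : ℚ) / 2 + B * c + C * b := by
  rw [pairing_latL_elem hN]
  simp only [of_apply, cons_val', cons_val_zero, cons_val_one, empty_val', cons_val_fin_one]
  push_cast
  field_simp
  ring

theorem Int.two_dvd_mul_add_mul_of_modEq {A D a d : ℤ} (hAD : A ≡ D [ZMOD 2])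
    (had : a ≡ d [ZMOD 2]) : 2 ∣ A * d + D * a := by
  have hsum : A * d + D * a = -((D - A) * d) + D * (d - a) + 2 * (D * a) := by ring
  rw [hsum]
  exact dvd_add (dvd_add (hAD.dvd.mul_right d).neg_right (had.dvd.mul_left D))
    (dvd_mul_right 2 _)

theorem exists_int_pairing_of_mem_latL' {N : ℕ} (hN : N ≠ 0) {x : Matrix (Fin 2) (Fin 2) ℚ}
    (hx : x ∈ latL' N) {y : Matrix (Fin 2) (Fin 2) ℚ} (hy : y ∈ latL N) :
    ∃ m : ℤ, (N : ℚ) * (x * y.adjugate).trace = m := by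
  obtain ⟨A, B, C, D, hAD, rfl⟩ := hx
  obtain ⟨a, b, c, d, had, rfl⟩ := hy
  obtain ⟨k, hk⟩ := Int.two_dvd_mul_add_mul_of_modEq hAD had
  refine ⟨k + B * c + C * b, ?_⟩
  rw [pairing_latL'_elem_latL_elem hN, hk]
  push_cast
  ring

theorem mem_latL'_of_dual {N : ℕ} (hN : N ≠ 0) {x : Matrix (Fin 2) (Fin 2) ℚ}
    (hx : ∀ y ∈ latL N, ∃ m : ℤ, (N : ℚ) * (x * y.adjugate).trace = m) : x ∈ latL' N := by
  have pairing_int : ∀ a b c d : ℤ, a % 2 = d % 2 →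
      ∃ m : ℤ, (N : ℚ) * (x 0 0 * d - x 0 1 * c + x 1 1 * a) + x 1 0 * b = m := by
    intro a b c d had
    rw [← pairing_latL_elem hN]
    exact hx _ ⟨a, b, c, d, had, rfl⟩
  obtain ⟨C, hC⟩ := pairing_int 0 1 0 0 rfl
  obtain ⟨B, hB⟩ := pairing_int 0 0 1 0 rfl
  obtain ⟨D, hD⟩ := pairing_int 2 0 0 0 rfl
  obtain ⟨A, hA⟩ := pairing_int 0 0 0 2 rfl
  obtain ⟨E, hE⟩ := pairing_int 1 0 0 1 rfl
  norm_num at hC hB hD hA hE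
  have hNq : (N : ℚ) ≠ 0 := Nat.cast_ne_zero.mpr hN
  have hAD : A + D = 2 * E := by
    exact_mod_cast (by linear_combination 2 * hE - hA - hD : (A : ℚ) + D = 2 * E)
  have h00 : x 0 0 = A / (2 * N) := by rw [eq_div_iff (by positivity)]; linarith
  have h01 : x 0 1 = -B / N := by rw [eq_div_iff hNq]; linarith
  have h11 : x 1 1 = D / (2 * N) := by rw [eq_div_iff (by positivity)]; linarith
  refine ⟨A, B, C, D, by omega, ?_⟩
  rw [eta_fin_two x, h00, h01, hC, h11]

/-- The dual lattice of `L` inside `V = M₂(ℚ)` with respect to the bilinear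
form `(x,y) = N·tr(x·adj(y))` equals `L'`. -/
theorem stmt6 (N : ℕ) (hN : 0 < N) :
    {x : Matrix (Fin 2) (Fin 2) ℚ |
      ∀ y ∈ latL N, ∃ m : ℤ, (N : ℚ) * (x * y.adjugate).trace = m} = latL' N :=
  Set.ext fun _ =>
    ⟨mem_latL'_of_dual hN.ne', fun hx _ hy => exists_int_pairing_of_mem_latL' hN.ne' hx hy⟩
end

section
/- For z₁, z₂ in the complex upper half plane and a real 2×2 matrix γ, the matrix η(z₁,z₂) = [[z₁, −z₁z₂],[1, −z₂]] is orthogonal to γ with respect to the bilinear form (x,y) = N·tr(x·adj(y)) if and only if z₁ = γ·z₂, where γ acts by fractional linear transformation (provided γ·z₂ is defined, i.e. the denominator is nonzero). -/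
open Matrix

/-- `η(z₁,z₂) = [[z₁, −z₁z₂],[1, −z₂]]`. -/
def etaMat (z₁ z₂ : ℂ) : Matrix (Fin 2) (Fin 2) ℂ := !![z₁, -z₁*z₂; 1, -z₂]

/-- For `z₁, z₂` in the upper half plane and a real matrix `γ` with
`cz₂ + d ≠ 0`, `η(z₁,z₂)` is orthogonal to `γ` for the (complex-bilinearly extended)
form `(x,y) = N·tr(x·adj(y))` if and only if `z₁ = γ·z₂ = (az₂+b)/(cz₂+d)`. -/
theorem stmt10 (N : ℕ) (hN : 0 < N) (γ : Matrix (Fin 2) (Fin 2) ℝ) (z₁ z₂ : ℂ)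
    (hz₁ : 0 < z₁.im) (hz₂ : 0 < z₂.im)
    (hden : (γ 1 0 : ℂ) * z₂ + (γ 1 1 : ℂ) ≠ 0) :
    (N : ℂ) * (etaMat z₁ z₂ * (γ.map (fun r => (r : ℂ))).adjugate).trace = 0 ↔
      z₁ = ((γ 0 0 : ℂ) * z₂ + (γ 0 1 : ℂ)) / ((γ 1 0 : ℂ) * z₂ + (γ 1 1 : ℂ)) := by
  have hNe : (N : ℂ) ≠ 0 := Nat.cast_ne_zero.mpr hN.ne'
  rw [eq_div_iff hden]
  have : (γ.map (fun r => (r : ℂ))) = !![(γ 0 0 : ℂ), (γ 0 1 : ℂ); (γ 1 0 : ℂ), (γ 1 1 : ℂ)] := by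
    ext i j; fin_cases i <;> fin_cases j <;> simp [Matrix.map]
  rw [this]
  simp only [etaMat, adjugate_fin_two_of, trace_fin_two, mul_apply, Fin.sum_univ_two,
    of_apply, cons_val', cons_val_zero, cons_val_one, head_cons, head_fin_const, empty_val',
    cons_val_fin_one]
  rw [mul_eq_zero, or_iff_right hNe]
  constructor <;> intro h <;> linear_combination h
end
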